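/- arXiv:0911.4446 — 5 statements merged into one kernel-verified Lean document; each statement's English description precedes it below -/
import Mathlib

section
/- The function f(y) = −y⁵/15120 satisfies the ordinary differential equation −(f·f')⁽⁴⁾ − β·f'·y + α·f = 0 for all real y, for every choice of parameters α and β with β = (1+α)/5. -/
lemma deriv_f : deriv (fun y : ℝ => -y ^ 5 / 15120) = fun y => -y ^ 4 / 3024 := by
  funext y
  have : (fun y : ℝ => -y ^ 5 / 15120) = fun y : ℝ => (-1/15120) * y ^ 5 := by
    funext y; ring
  rw [this]
  simp [deriv_const_mul, deriv_pow]
  ring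

lemma inner_eq : (fun y : ℝ => (-y ^ 5 / 15120) * deriv (fun y : ℝ => -y ^ 5 / 15120) y)
    = fun y : ℝ => (1/45722880) * y ^ 9 := by
  funext y; rw [deriv_f]; ring

lemma dpow (n : ℕ) (c : ℝ) : deriv (fun y : ℝ => c * y ^ n) = fun y => (c * n) * y ^ (n-1) := by
  funext y
  simp [deriv_const_mul, deriv_pow]
  ring

lemma it4 : iteratedDeriv 4 (fun y : ℝ => (1/45722880 : ℝ) * y ^ 9) = fun y => (1/15120) * y ^ 5 := by
  rw [show (4:ℕ) = 3+1 from rfl, iteratedDeriv_succ', dpow,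
      show (3:ℕ) = 2+1 from rfl, iteratedDeriv_succ', dpow,
      show (2:ℕ) = 1+1 from rfl, iteratedDeriv_succ', dpow,
      show (1:ℕ) = 0+1 from rfl, iteratedDeriv_succ', dpow, iteratedDeriv_zero]
  funext y; norm_num

theorem explicit_fast_growing_solution_blowup_ODE (α β : ℝ) (hβ : β = (1 + α) / 5) :
    ∀ y : ℝ,
      -(iteratedDeriv 4
          (fun y : ℝ => (-y ^ 5 / 15120) * deriv (fun y : ℝ => -y ^ 5 / 15120) y) y)
        - β * deriv (fun y : ℝ => -y ^ 5 / 15120) y * y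
        + α * (-y ^ 5 / 15120) = 0 := by
  intro y
  rw [inner_eq, it4, deriv_f, hβ]
  ring
end

section
/- The function f(y) defined by f(y) = (4/3)cos²(y/4) for |y| ≤ 2π and f(y) = 0 for |y| ≥ 2π is continuously differentiable on ℝ and satisfies f = (f²)'' + f² at every point y with |y| ≠ 2π. -/
open Real

noncomputable def rosenauHymanCompacton (y : ℝ) : ℝ :=
  if |y| ≤ 2 * Real.pi then (4 / 3) * Real.cos (y / 4) ^ 2 else 0

/-!
On `[-2π, 2π]` the compacton is the arch `(4/3) cos²(y/4) = (2/3)(1 + cos(y/2))`, whose square is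
the trigonometric polynomial `2/3 + (8/9) cos(y/2) + (2/9) cos y`; differentiating it twice shows
that the arch solves `f = (f²)'' + f²` on the whole line. The arch and its derivative vanish at
`±2π`, so cutting it off outside `[-2π, 2π]` keeps it `C¹`, and away from `|y| = 2π` the compacton
coincides near `y` with the arch or with `0`, both solutions of the ODE.
-/

open Set Filter Topology

section Indicator

variable {α M : Type*} [TopologicalSpace α] [Zero M] {s : Set α} {g : α → M} {x : α}

theorem indicator_eventuallyEq_of_mem_interior (hx : x ∈ interior s) :
    s.indicator g =ᶠ[𝓝 x] g :=
  eventuallyEq_of_mem (mem_interior_iff_mem_nhds.mp hx) fun _ hy => indicator_of_mem hy g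

theorem indicator_eventuallyEq_zero_of_mem_interior_compl (hx : x ∈ interior sᶜ) :
    s.indicator g =ᶠ[𝓝 x] 0 :=
  eventuallyEq_of_mem (mem_interior_iff_mem_nhds.mp hx) fun _ hy => indicator_of_notMem hy g

end Indicator

section IndicatorDeriv

variable {𝕜 E : Type*} [NontriviallyNormedField 𝕜] [NormedAddCommGroup E] [NormedSpace 𝕜 E]
  {s : Set 𝕜} {g g' : 𝕜 → E} {x : 𝕜}

theorem HasDerivAt.indicator_of_notMem_frontier (hg : HasDerivAt g (g' x) x)
    (hx : x ∉ frontier s) : HasDerivAt (s.indicator g) (s.indicator g' x) x := by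
  rw [← mem_compl_iff, compl_frontier_eq_union_interior] at hx
  rcases hx with hx | hx
  · rw [indicator_of_mem (interior_subset hx)]
    exact hg.congr_of_eventuallyEq (indicator_eventuallyEq_of_mem_interior hx)
  · rw [indicator_of_notMem (interior_subset hx)]
    exact (hasDerivAt_const x 0).congr_of_eventuallyEq
      (indicator_eventuallyEq_zero_of_mem_interior_compl hx)

theorem HasDerivAt.indicator_of_eq_zero (hg : HasDerivAt g 0 x) (hgx : g x = 0) :
    HasDerivAt (s.indicator g) 0 x := by
  rw [hasDerivAt_iff_isLittleO] at hg ⊢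
  refine (Asymptotics.isBigO_of_le _ fun y => ?_).trans_isLittleO hg
  have hx0 : s.indicator g x = 0 := indicator_apply_eq_zero.mpr fun _ => hgx
  simpa [hgx, hx0] using norm_indicator_le_norm_self (s := s) g y

theorem ContDiff.indicator_of_vanish_on_frontier (hg : ContDiff 𝕜 1 g)
    (hfr : ∀ x ∈ frontier s, g x = 0 ∧ deriv g x = 0) : ContDiff 𝕜 1 (s.indicator g) := by
  have hg' : ∀ x, HasDerivAt g (deriv g x) x := fun x =>
    (hg.differentiable one_ne_zero x).hasDerivAt
  have hderiv : ∀ x, HasDerivAt (s.indicator g) (s.indicator (deriv g) x) x := by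
    intro x
    by_cases hx : x ∈ frontier s
    · obtain ⟨hgx, hg'x⟩ := hfr x hx
      rw [indicator_apply_eq_zero.mpr fun _ => hg'x]
      exact (hg'x ▸ hg' x).indicator_of_eq_zero hgx
    · exact (hg' x).indicator_of_notMem_frontier hx
  rw [contDiff_one_iff_deriv]
  refine ⟨fun x => (hderiv x).differentiableAt, ?_⟩
  rw [funext fun x => (hderiv x).deriv]
  exact (hg.continuous_deriv le_rfl).indicator fun x hx => (hfr x hx).2

end IndicatorDeriv

def SolvesK22WaveODEAt (f : ℝ → ℝ) (y : ℝ) : Prop :=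
  f y = deriv (deriv fun z => f z ^ 2) y + f y ^ 2

section WaveODE

variable {f g : ℝ → ℝ} {s : Set ℝ} {y : ℝ}

theorem SolvesK22WaveODEAt.congr_of_eventuallyEq (hg : SolvesK22WaveODEAt g y)
    (h : f =ᶠ[𝓝 y] g) : SolvesK22WaveODEAt f y := by
  have hsq : (fun z => f z ^ 2) =ᶠ[𝓝 y] fun z => g z ^ 2 := h.fun_comp (· ^ 2)
  rw [SolvesK22WaveODEAt, hsq.deriv.deriv_eq, h.eq_of_nhds]
  exact hg

theorem solvesK22WaveODEAt_zero : SolvesK22WaveODEAt 0 y := by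
  simp [SolvesK22WaveODEAt]

theorem SolvesK22WaveODEAt.indicator_of_notMem_frontier (hg : SolvesK22WaveODEAt g y)
    (hy : y ∉ frontier s) : SolvesK22WaveODEAt (s.indicator g) y := by
  rw [← mem_compl_iff, compl_frontier_eq_union_interior] at hy
  rcases hy with hy | hy
  · exact hg.congr_of_eventuallyEq (indicator_eventuallyEq_of_mem_interior hy)
  · exact solvesK22WaveODEAt_zero.congr_of_eventuallyEq
      (indicator_eventuallyEq_zero_of_mem_interior_compl hy)

end WaveODE

noncomputable def compactonArch (y : ℝ) : ℝ := 4 / 3 * cos (y / 4) ^ 2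

theorem compactonArch_eq (y : ℝ) : compactonArch y = 2 / 3 * (1 + cos (y / 2)) := by
  rw [compactonArch, cos_sq, show 2 * (y / 4) = y / 2 by ring]
  ring

theorem compactonArch_sq_eq (y : ℝ) :
    compactonArch y ^ 2 = 2 / 3 + 8 / 9 * cos (y / 2) + 2 / 9 * cos y := by
  have h := cos_sq (y / 2)
  rw [show 2 * (y / 2) = y by ring] at h
  rw [compactonArch_eq]
  linear_combination 4 / 9 * h

theorem contDiff_compactonArch : ContDiff ℝ 1 compactonArch := by
  unfold compactonArch
  fun_prop

theorem hasDerivAt_compactonArch (y : ℝ) :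
    HasDerivAt compactonArch (-(1 / 3) * sin (y / 2)) y := by
  rw [funext compactonArch_eq]
  have hcos := ((hasDerivAt_id' y).div_const 2).cos
  exact ((hcos.const_add 1).const_mul (2 / 3 : ℝ)).congr_deriv (by ring)

theorem hasDerivAt_compactonArch_sq (y : ℝ) :
    HasDerivAt (fun z => compactonArch z ^ 2) (-(4 / 9) * sin (y / 2) - 2 / 9 * sin y) y := by
  rw [funext compactonArch_sq_eq]
  have hcos := ((hasDerivAt_id' y).div_const 2).cos
  exact (((hcos.const_mul (8 / 9 : ℝ)).const_add (2 / 3 : ℝ)).add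
    ((hasDerivAt_cos y).const_mul (2 / 9 : ℝ))).congr_deriv (by ring)

theorem hasDerivAt_deriv_compactonArch_sq (y : ℝ) :
    HasDerivAt (deriv fun z => compactonArch z ^ 2) (-(2 / 9) * cos (y / 2) - 2 / 9 * cos y) y := by
  rw [funext fun z => (hasDerivAt_compactonArch_sq z).deriv]
  have hsin := ((hasDerivAt_id' y).div_const 2).sin
  exact ((hsin.const_mul (-(4 / 9) : ℝ)).sub
    ((hasDerivAt_sin y).const_mul (2 / 9 : ℝ))).congr_deriv (by ring)

theorem solvesK22WaveODEAt_compactonArch (y : ℝ) : SolvesK22WaveODEAt compactonArch y := by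
  rw [SolvesK22WaveODEAt, (hasDerivAt_deriv_compactonArch_sq y).deriv, compactonArch_sq_eq,
    compactonArch_eq]
  ring

theorem compactonArch_and_deriv_eq_zero_of_abs_eq {y : ℝ} (hy : |y| = 2 * π) :
    compactonArch y = 0 ∧ deriv compactonArch y = 0 := by
  rw [(hasDerivAt_compactonArch y).deriv, compactonArch_eq]
  rcases (abs_eq (by positivity)).mp hy with rfl | rfl <;> simp [neg_div, mul_div_cancel_left₀]

theorem rosenauHyman_compacton_solves_K22 :
    ContDiff ℝ 1 rosenauHymanCompacton ∧
    ∀ y : ℝ, |y| ≠ 2 * Real.pi →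
      rosenauHymanCompacton y
        = deriv (deriv (fun y : ℝ => rosenauHymanCompacton y ^ 2)) y
          + rosenauHymanCompacton y ^ 2 := by
  have hf : rosenauHymanCompacton = {y | |y| ≤ 2 * π}.indicator compactonArch := by
    funext y
    simp [rosenauHymanCompacton, indicator_apply, compactonArch]
  have hfr : frontier {y : ℝ | |y| ≤ 2 * π} ⊆ {y | |y| = 2 * π} :=
    frontier_le_subset_eq continuous_abs continuous_const
  rw [hf]
  exact ⟨contDiff_compactonArch.indicator_of_vanish_on_frontier fun y hy =>
      compactonArch_and_deriv_eq_zero_of_abs_eq (hfr hy),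
    fun y hy => (solvesK22WaveODEAt_compactonArch y).indicator_of_notMem_frontier
      fun h => hy (hfr h)⟩
end

section
/- The function f(y) = (1/105)·cos⁴(y/2) satisfies the ordinary differential equation f' = (f²)⁽⁵⁾ + 25·(f²)''' + 144·(f²)' for all real y. -/
/-!
Both `cos⁴(y/2)` and `cos⁸(y/2)` are trigonometric polynomials in `y` (power reduction), of
frequencies `0,1,2` and `0,…,4`. The operator `D⁵ + 25 D³ + 144 D = D (D² + 9) (D² + 16)` sends
`cos (k y)` to `-k (k² - 9) (k² - 16) sin (k y)`: it kills the frequencies `3` and `4` of `f²` and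
multiplies the frequencies `1` and `2` by the same factor `-120`, which matches `f'` exactly.
-/

open Real Finset

theorem Real.cos_pow_four (x : ℝ) : cos x ^ 4 = (3 + 4 * cos (2 * x) + cos (4 * x)) / 8 := by
  have h4 : cos (4 * x) = 2 * cos (2 * x) ^ 2 - 1 := by rw [← cos_two_mul]; ring_nf
  rw [h4, cos_two_mul]; ring

theorem Real.cos_pow_eight (x : ℝ) :
    cos x ^ 8 = (35 + 56 * cos (2 * x) + 28 * cos (4 * x) + 8 * cos (6 * x) + cos (8 * x)) / 128 := by
  have h4 : cos (4 * x) = 2 * cos (2 * x) ^ 2 - 1 := by rw [← cos_two_mul]; ring_nf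
  have h6 : cos (6 * x) = 4 * cos (2 * x) ^ 3 - 3 * cos (2 * x) := by rw [← cos_three_mul]; ring_nf
  have h8 : cos (8 * x) = 2 * cos (4 * x) ^ 2 - 1 := by rw [← cos_two_mul]; ring_nf
  rw [h8, h6, h4, cos_two_mul]; ring

theorem Real.iteratedDeriv_odd_cos_const_mul (m : ℕ) (k : ℝ) :
    iteratedDeriv (2 * m + 1) (fun y => cos (k * y))
      = fun y => (-1) ^ (m + 1) * k ^ (2 * m + 1) * sin (k * y) := by
  rw [iteratedDeriv_comp_const_mul contDiff_cos, iteratedDeriv_odd_cos]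
  ext y
  simp only [Pi.mul_apply, Pi.pow_apply, Pi.neg_apply, Pi.one_apply]
  ring

theorem Real.iteratedDeriv_odd_sum_mul_cos {ι : Type*} (s : Finset ι) (c ω : ι → ℝ) (m : ℕ)
    (y : ℝ) :
    iteratedDeriv (2 * m + 1) (fun y => ∑ i ∈ s, c i * cos (ω i * y)) y
      = (-1) ^ (m + 1) * ∑ i ∈ s, c i * ω i ^ (2 * m + 1) * sin (ω i * y) := by
  rw [iteratedDeriv_fun_sum fun i _ => by fun_prop, mul_sum]
  refine sum_congr rfl fun i _ => ?_
  rw [iteratedDeriv_const_mul_field, iteratedDeriv_odd_cos_const_mul]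
  ring

theorem quintic_compacton_identity :
    ∀ y : ℝ,
      deriv (fun y : ℝ => (1/105) * Real.cos (y/2) ^ 4) y
        = iteratedDeriv 5 (fun y : ℝ => ((1/105) * Real.cos (y/2) ^ 4) ^ 2) y
          + 25 * iteratedDeriv 3 (fun y : ℝ => ((1/105) * Real.cos (y/2) ^ 4) ^ 2) y
          + 144 * deriv (fun y : ℝ => ((1/105) * Real.cos (y/2) ^ 4) ^ 2) y := by
  have hf : (fun y : ℝ => (1/105) * cos (y/2) ^ 4)
      = fun y => ∑ i : Fin 3, ![3, 4, 1] i / 840 * cos (i * y) := by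
    ext y
    simp only [Fin.sum_univ_three, Matrix.cons_val, Fin.coe_ofNat_eq_mod, Nat.reduceMod,
      Nat.cast_ofNat, Nat.cast_zero, Nat.cast_one, zero_mul, cos_zero, cos_pow_four]
    ring_nf
  have hf_sq : (fun y : ℝ => ((1/105) * cos (y/2) ^ 4) ^ 2)
      = fun y => ∑ i : Fin 5, ![35, 56, 28, 8, 1] i / 1411200 * cos (i * y) := by
    ext y
    simp only [Fin.sum_univ_five, Matrix.cons_val, Fin.coe_ofNat_eq_mod, Nat.reduceMod,
      Nat.cast_ofNat, Nat.cast_zero, Nat.cast_one, zero_mul, cos_zero, mul_pow, ← pow_mul,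
      Nat.reduceMul, cos_pow_eight]
    ring_nf
  intro y
  rw [hf, hf_sq, ← iteratedDeriv_one, ← iteratedDeriv_one, iteratedDeriv_odd_sum_mul_cos _ _ _ 0,
    iteratedDeriv_odd_sum_mul_cos _ _ _ 2, iteratedDeriv_odd_sum_mul_cos _ _ _ 1,
    iteratedDeriv_odd_sum_mul_cos _ _ _ 0]
  simp only [Fin.sum_univ_three, Fin.sum_univ_five, Matrix.cons_val, Fin.coe_ofNat_eq_mod,
    Nat.reduceMod, Nat.cast_ofNat, Nat.cast_zero, Nat.cast_one, zero_mul, sin_zero]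
  ring
end

section
/- Let g : ℝ → ℝ be five times continuously differentiable and satisfy (g·g')⁽⁴⁾(z) = 120 g'(z)z + 240 g''(z)z² + 120 g'''(z)z³ + 20 g⁽⁴⁾(z)z⁴ + g⁽⁵⁾(z)z⁵ for all z, together with g(0) = g''(0) = g⁽⁴⁾(0) = 0. Then g satisfies the first-order equation g(z)·g'(z) = z⁵·g'(z) + A·z + B·z³ for all z, where A = (g'(0))² and B = (2/3)·g'(0)·g'''(0). -/
/-!
The ODE says exactly that `ψ z = g z * g' z - z ^ 5 * g' z` has vanishing fourth derivative, so `ψ`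
equals its cubic Taylor polynomial at `0`. The Taylor coefficients come from the Leibniz rule:
`z ^ 5 * g' z` contributes nothing below order five, and those of `g * g'` reduce, using
`g 0 = g'' 0 = 0`, to `ψ' 0 = g' 0 ^ 2`, `ψ'' 0 = 0` and `ψ''' 0 = 4 * g' 0 * g''' 0`.
-/

open scoped Nat

theorem eq_taylor_sum_of_iteratedDeriv_eq_zero {f : ℝ → ℝ} {n : ℕ} (hf : ContDiff ℝ n f)
    (hn : ∀ x, iteratedDeriv n f x = 0) (x₀ x : ℝ) :
    f x = ∑ k ∈ Finset.range n, iteratedDeriv k f x₀ / k ! * (x - x₀) ^ k := by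
  cases n with
  | zero => simpa using hn x
  | succ m =>
    rcases eq_or_ne x₀ x with rfl | hx
    · simp [Finset.sum_range_succ']
    obtain ⟨x', -, hrem⟩ := taylor_mean_remainder_lagrange_iteratedDeriv hx hf.contDiffOn
    rw [hn, zero_mul, zero_div, sub_eq_zero, taylor_within_apply] at hrem
    rw [hrem]
    refine Finset.sum_congr rfl fun k hk => ?_
    rw [iteratedDerivWithin_eq_iteratedDeriv (uniqueDiffOn_uIcc hx) _ Set.left_mem_uIcc,
      smul_eq_mul]
    · ring
    · exact hf.contDiffAt.of_le (by exact_mod_cast (Finset.mem_range.mp hk).le)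

section
variable {𝕜 : Type*} [NontriviallyNormedField 𝕜]

theorem iteratedDeriv_pow_mul_zero_of_lt {f : 𝕜 → 𝕜} {k m : ℕ} (hkm : k < m)
    (hf : ContDiffAt 𝕜 k f 0) : iteratedDeriv k (fun z => z ^ m * f z) 0 = 0 := by
  rw [iteratedDeriv_fun_mul (by fun_prop) hf]
  refine Finset.sum_eq_zero fun i hi => ?_
  have him : i ≠ m := by have := Finset.mem_range.mp hi; omega
  rw [iteratedDeriv_fun_pow_zero, if_neg him, Nat.cast_zero, mul_zero, zero_mul]

theorem iteratedDeriv_four_pow_five_mul {f : 𝕜 → 𝕜} {z : 𝕜} (hf : ContDiffAt 𝕜 4 f z) :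
    iteratedDeriv 4 (fun z => z ^ 5 * f z) z
      = 120 * f z * z + 240 * iteratedDeriv 1 f z * z ^ 2 + 120 * iteratedDeriv 2 f z * z ^ 3
        + 20 * iteratedDeriv 3 f z * z ^ 4 + iteratedDeriv 4 f z * z ^ 5 := by
  rw [iteratedDeriv_fun_mul (by fun_prop) hf]
  simp only [iteratedDeriv_pow, Finset.sum_range_succ, Finset.range_one, Finset.sum_singleton,
    Nat.choose, Nat.descFactorial, Nat.reduceSub, Nat.reduceMul, Nat.cast_ofNat, Nat.cast_one,
    iteratedDeriv_zero, iteratedDeriv_one]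
  ring

theorem iteratedDeriv_mul_deriv_self {g : 𝕜 → 𝕜} {n : ℕ} (hg : ContDiff 𝕜 (n + 1) g) (x : 𝕜) :
    iteratedDeriv n (fun z => g z * deriv g z) x = ∑ i ∈ Finset.range (n + 1),
      n.choose i * iteratedDeriv i g x * iteratedDeriv (n - i + 1) g x := by
  rw [iteratedDeriv_fun_mul hg.of_succ.contDiffAt hg.deriv'.contDiffAt]
  simp only [iteratedDeriv_succ']

end

theorem fifth_order_in_time_ODE_first_integral_general
    (g : ℝ → ℝ) (hg : ContDiff ℝ 5 g)
    (hODE : ∀ z : ℝ,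
      iteratedDeriv 4 (fun z : ℝ => g z * deriv g z) z
        = 120 * deriv g z * z + 240 * iteratedDeriv 2 g z * z ^ 2
          + 120 * iteratedDeriv 3 g z * z ^ 3
          + 20 * iteratedDeriv 4 g z * z ^ 4 + iteratedDeriv 5 g z * z ^ 5)
    (h0 : g 0 = 0) (h2 : iteratedDeriv 2 g 0 = 0) :
    ∀ z : ℝ,
      g z * deriv g z
        = z ^ 5 * deriv g z + (deriv g 0) ^ 2 * z
          + (2/3) * deriv g 0 * iteratedDeriv 3 g 0 * z ^ 3 := by
  have hg' : ContDiff ℝ 4 (deriv g) := hg.deriv'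
  have hF : ContDiff ℝ 4 (fun z => g z * deriv g z) := (hg.of_le (by norm_num)).mul hg'
  have hP : ContDiff ℝ 4 (fun z : ℝ => z ^ 5 * deriv g z) := by fun_prop
  set ψ := fun z => g z * deriv g z - z ^ 5 * deriv g z with hψ
  clear_value ψ
  have hψ_four : ∀ z, iteratedDeriv 4 ψ z = 0 := fun z => by
    rw [hψ, iteratedDeriv_fun_sub hF.contDiffAt hP.contDiffAt, hODE,
      iteratedDeriv_four_pow_five_mul hg'.contDiffAt]
    simp only [← iteratedDeriv_succ']
    ring
  have hψ_zero : ∀ k < 4, iteratedDeriv k ψ 0 = ∑ i ∈ Finset.range (k + 1),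
      k.choose i * iteratedDeriv i g 0 * iteratedDeriv (k - i + 1) g 0 := fun k hk => by
    have hk4 : (k : WithTop ℕ∞) ≤ 4 := by exact_mod_cast hk.le
    rw [hψ, iteratedDeriv_fun_sub (hF.of_le hk4).contDiffAt (hP.of_le hk4).contDiffAt,
      iteratedDeriv_pow_mul_zero_of_lt (by omega) (hg'.of_le hk4).contDiffAt, sub_zero,
      iteratedDeriv_mul_deriv_self (hg.of_le (by exact_mod_cast (by omega : k + 1 ≤ 5)))]
  intro z
  have hTaylor := eq_taylor_sum_of_iteratedDeriv_eq_zero (hψ ▸ hF.sub hP) hψ_four 0 z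
  simp only [Finset.sum_range_succ, Finset.sum_range_zero, hψ_zero 0 (by norm_num),
    hψ_zero 1 (by norm_num), hψ_zero 2 (by norm_num), hψ_zero 3 (by norm_num)] at hTaylor
  subst hψ
  norm_num [Nat.factorial, h0, h2] at hTaylor
  linear_combination hTaylor

theorem fifth_order_in_time_ODE_first_integral
    (g : ℝ → ℝ) (hg : ContDiff ℝ 5 g)
    (hODE : ∀ z : ℝ,
      iteratedDeriv 4 (fun z : ℝ => g z * deriv g z) z
        = 120 * deriv g z * z + 240 * iteratedDeriv 2 g z * z ^ 2
          + 120 * iteratedDeriv 3 g z * z ^ 3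
          + 20 * iteratedDeriv 4 g z * z ^ 4 + iteratedDeriv 5 g z * z ^ 5)
    (h0 : g 0 = 0) (h2 : iteratedDeriv 2 g 0 = 0) (h4 : iteratedDeriv 4 g 0 = 0) :
    ∀ z : ℝ,
      g z * deriv g z
        = z ^ 5 * deriv g z + (deriv g 0) ^ 2 * z
          + (2/3) * deriv g 0 * iteratedDeriv 3 g 0 * z ^ 3 :=
  fifth_order_in_time_ODE_first_integral_general g hg hODE h0 h2
end

section
/- Suppose g : ℝ → ℝ is continuous, odd, and satisfies g(z) → 1 as z → −∞ and |g(z) − 1| ≤ C|z|^{-5/8} for z ≤ −1 and some constant C. Define u(x,t) = g(x/(−t)^{1/5}) for t < 0. Then for every l > 0, ∫_{−l}^{l} |u(x,t) − S₋(x)| dx → 0 as t → 0⁻, where S₋(x) = −sign x. -/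
/-!
As `t → 0⁻` the scale `(-t)^(1/5)` tends to `0⁺`, so for `x ≠ 0` the similarity variable
`x / (-t)^(1/5)` escapes to `-∞` or `+∞`, and `u(x, t)` tends to `g(-∞) = 1` or, by oddness,
`g(+∞) = -1`; that is, to `-sign x`. A continuous function with finite limits at `±∞` is bounded,
so the bounded convergence theorem on `[-l, l]` turns this pointwise convergence into `L¹`
convergence.
-/

open Filter Set intervalIntegral Topology Bornology MeasureTheory

lemma Real.measurable_sign : Measurable Real.sign :=
  Measurable.ite measurableSet_Iio measurable_const <|
    Measurable.ite measurableSet_Ioi measurable_const measurable_const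

lemma Real.abs_sign_le_one (x : ℝ) : |Real.sign x| ≤ 1 := by
  rcases Real.sign_apply_eq x with h | h | h <;> simp [h]

lemma Function.Odd.tendsto_atTop {α β : Type*} [AddCommGroup α] [PartialOrder α]
    [IsOrderedAddMonoid α] [AddCommGroup β] [TopologicalSpace β] [IsTopologicalAddGroup β]
    {f : α → β} (hf : Function.Odd f) {b : β} (h : Tendsto f atBot (𝓝 b)) :
    Tendsto f atTop (𝓝 (-b)) := by
  simpa [Function.comp_def, hf _] using (h.comp tendsto_neg_atTop_atBot).neg

lemma Continuous.isBounded_range_of_tendsto_atBot_atTop {β E : Type*} [TopologicalSpace β]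
    [LinearOrder β] [OrderClosedTopology β] [CompactIccSpace β] [NoMaxOrder β] [NoMinOrder β]
    [SeminormedAddCommGroup E] {f : β → E} (hf : Continuous f) {a b : E}
    (ha : Tendsto f atBot (𝓝 a)) (hb : Tendsto f atTop (𝓝 b)) : IsBounded (range f) :=
  hf.isBounded_range_iff_isBigO_atTop_atBot.2 ⟨hb.isBigO_one ℝ, ha.isBigO_one ℝ⟩

lemma Real.tendsto_rpow_nhdsGT_zero {p : ℝ} (hp : 0 < p) :
    Tendsto (fun x : ℝ => x ^ p) (𝓝[>] 0) (𝓝[>] 0) := by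
  refine tendsto_nhdsWithin_of_tendsto_nhds_of_eventually_within _ ?_
    (eventually_nhdsWithin_of_forall fun x hx => Real.rpow_pos_of_pos hx p)
  simpa [Real.zero_rpow hp.ne'] using
    (Real.continuousAt_rpow_const 0 p (Or.inr hp.le)).tendsto.mono_left nhdsWithin_le_nhds

lemma Real.tendsto_neg_rpow_nhdsLT_zero {p : ℝ} (hp : 0 < p) :
    Tendsto (fun t : ℝ => (-t) ^ p) (𝓝[<] 0) (𝓝[>] 0) :=
  (Real.tendsto_rpow_nhdsGT_zero hp).comp (by simpa using tendsto_neg_nhdsLT (a := (0:ℝ)))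

lemma tendsto_comp_div_of_neg {g : ℝ → ℝ} {a : ℝ} (hg : Tendsto g atBot (𝓝 a))
    {ι : Type*} {l : Filter ι} {s : ι → ℝ} (hs : Tendsto s l (𝓝[>] 0)) {x : ℝ} (hx : x < 0) :
    Tendsto (fun i => g (x / s i)) l (𝓝 a) := by
  simp_rw [div_eq_mul_inv]
  exact hg.comp ((tendsto_const_mul_atBot_of_neg hx).2 hs.inv_tendsto_nhdsGT_zero)

lemma tendsto_comp_div_of_pos {g : ℝ → ℝ} {b : ℝ} (hg : Tendsto g atTop (𝓝 b))
    {ι : Type*} {l : Filter ι} {s : ι → ℝ} (hs : Tendsto s l (𝓝[>] 0)) {x : ℝ} (hx : 0 < x) :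
    Tendsto (fun i => g (x / s i)) l (𝓝 b) := by
  simp_rw [div_eq_mul_inv]
  exact hg.comp ((tendsto_const_mul_atTop_of_pos hx).2 hs.inv_tendsto_nhdsGT_zero)

lemma tendsto_comp_div_neg_sign {g : ℝ → ℝ} (hbot : Tendsto g atBot (𝓝 1))
    (htop : Tendsto g atTop (𝓝 (-1))) {ι : Type*} {l : Filter ι} {s : ι → ℝ}
    (hs : Tendsto s l (𝓝[>] 0)) {x : ℝ} (hx : x ≠ 0) :
    Tendsto (fun i => g (x / s i)) l (𝓝 (-Real.sign x)) := by
  rcases hx.lt_or_gt with hneg | hpos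
  · simpa [Real.sign_of_neg hneg] using tendsto_comp_div_of_neg hbot hs hneg
  · simpa [Real.sign_of_pos hpos] using tendsto_comp_div_of_pos htop hs hpos

lemma intervalIntegral.tendsto_integral_norm_sub_of_bounded {E : Type*}
    [SeminormedAddCommGroup E] {μ : Measure ℝ} [IsLocallyFiniteMeasure μ] {ι : Type*}
    {l : Filter ι} [l.IsCountablyGenerated] {F : ι → ℝ → E} {f : ℝ → E} {a b M N : ℝ}
    (hF_meas : ∀ i, AEStronglyMeasurable (F i) μ) (hf_meas : AEStronglyMeasurable f μ)
    (hF_bound : ∀ i x, ‖F i x‖ ≤ M) (hf_bound : ∀ x, ‖f x‖ ≤ N)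
    (h_lim : ∀ᵐ x ∂μ, Tendsto (fun i => F i x) l (𝓝 (f x))) :
    Tendsto (fun i => ∫ x in a..b, ‖F i x - f x‖ ∂μ) l (𝓝 0) := by
  rw [← intervalIntegral.integral_zero]
  refine tendsto_integral_filter_of_dominated_convergence (fun _ => M + N)
    (.of_forall fun i => ((hF_meas i).sub hf_meas).norm.restrict)
    (.of_forall fun i => .of_forall fun x _ => (norm_norm (F i x - f x)).trans_le <|
      (norm_sub_le _ _).trans (add_le_add (hF_bound i x) (hf_bound x)))
    intervalIntegrable_const (h_lim.mono fun x hx _ => ?_)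
  simpa using (hx.sub_const (f x)).norm

theorem shock_formation_L1loc_convergence_general
    (g : ℝ → ℝ) (hcont : Continuous g) (hodd : ∀ z : ℝ, g (-z) = -g z)
    (hlim : Tendsto g atBot (nhds 1)) :
    ∀ l : ℝ, 0 < l →
      Tendsto
        (fun t : ℝ => ∫ x in (-l)..l, |g (x / (-t) ^ ((1:ℝ)/5)) - (-Real.sign x)|)
        (nhdsWithin 0 (Set.Iio 0)) (nhds 0) := by
  intro l _
  have hlim_top : Tendsto g atTop (𝓝 (-1)) := Function.Odd.tendsto_atTop hodd hlim
  obtain ⟨M, hM⟩ := isBounded_iff_forall_norm_le.1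
    (hcont.isBounded_range_of_tendsto_atBot_atTop hlim hlim_top)
  simp_rw [← Real.norm_eq_abs]
  refine intervalIntegral.tendsto_integral_norm_sub_of_bounded
    (fun t => (hcont.measurable.comp (measurable_id.div_const _)).aestronglyMeasurable)
    Real.measurable_sign.neg.aestronglyMeasurable (fun _ _ => hM _ (mem_range_self _))
    (fun x => (norm_neg _).trans_le (Real.abs_sign_le_one x)) ?_
  filter_upwards [volume.ae_ne (0:ℝ)] with x hx
  exact tendsto_comp_div_neg_sign hlim hlim_top
    (Real.tendsto_neg_rpow_nhdsLT_zero (by norm_num)) hx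

theorem shock_formation_L1loc_convergence
    (g : ℝ → ℝ) (hcont : Continuous g) (hodd : ∀ z : ℝ, g (-z) = -g z)
    (hlim : Tendsto g atBot (nhds 1))
    (C : ℝ) (hdecay : ∀ z : ℝ, z ≤ -1 → |g z - 1| ≤ C * |z| ^ (-(5:ℝ)/8)) :
    ∀ l : ℝ, 0 < l →
      Tendsto
        (fun t : ℝ => ∫ x in (-l)..l, |g (x / (-t) ^ ((1:ℝ)/5)) - (-Real.sign x)|)
        (nhdsWithin 0 (Set.Iio 0)) (nhds 0) :=
  shock_formation_L1loc_convergence_general g hcont hodd hlim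
end
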